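/- For every t ∈ (0,1) and every a ≥ 0: ∫_t^1 (1/√((1−s)(s−t))) · exp(−a/(s−t)) ds = √π · ∫_{a/(1−t)}^{∞} e^{−u} · u^{−1/2} du. -/

import Mathlib

/-!
The affine change `s = t + (1 - t) v` reduces the left side to
`∫₀¹ e^{-b/v} / √((1 - v) v) dv` with `b = a / (1 - t)`, and `v = 1 / (1 + y²)` turns this into
`2 ∫₀^∞ e^{-b(1+y²)} / (1 + y²) dy`. Writing `e^{-b(1+y²)} / (1 + y²) = ∫_b^∞ e^{-u(1+y²)} du`
and exchanging the integrals, the inner `y`-integral is the half Gaussian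
`e^{-u} ∫₀^∞ e^{-u y²} dy = e^{-u} √π / (2 √u)`.
-/

open MeasureTheory Real Set

lemma setIntegral_Ioo_eq_mul_setIntegral_Ioo_zero_one (f : ℝ → ℝ) {t : ℝ} (ht : t < 1) :
    ∫ s in Ioo t 1, f s = (1 - t) * ∫ v in Ioo 0 1, f ((1 - t) * v + t) := by
  have h1t : 0 < 1 - t := sub_pos.2 ht
  have hcomp := intervalIntegral.integral_comp_mul_add f h1t.ne' t (a := 0) (b := 1)
  rw [mul_zero, zero_add, mul_one, sub_add_cancel] at hcomp
  rw [intervalIntegral.integral_of_le zero_le_one, intervalIntegral.integral_of_le ht.le,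
    integral_Ioc_eq_integral_Ioo, integral_Ioc_eq_integral_Ioo, smul_eq_mul] at hcomp
  rw [hcomp, mul_inv_cancel_left₀ h1t.ne']

lemma image_inv_one_add_sq_Ioi :
    (fun y : ℝ => (1 + y ^ 2)⁻¹) '' Ioi 0 = Ioo 0 1 := by
  ext x
  simp only [mem_image, mem_Ioi, mem_Ioo]
  constructor
  · rintro ⟨y, hy, rfl⟩
    exact ⟨by positivity, inv_lt_one_of_one_lt₀ (by nlinarith)⟩
  · rintro ⟨hx0, hx1⟩
    have hq : 0 < (1 - x) / x := div_pos (by linarith) hx0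
    refine ⟨√((1 - x) / x), sqrt_pos.2 hq, ?_⟩
    rw [sq_sqrt hq.le]
    field_simp
    ring

lemma strictAntiOn_inv_one_add_sq : StrictAntiOn (fun y : ℝ => (1 + y ^ 2)⁻¹) (Ioi 0) :=
  fun x hx y _ hxy => inv_strictAnti₀ (by positivity) (by nlinarith [mem_Ioi.1 hx])

lemma setIntegral_Ioo_zero_one_eq_setIntegral_Ioi (f : ℝ → ℝ) :
    ∫ v in Ioo 0 1, f v = ∫ y in Ioi 0, 2 * y / (1 + y ^ 2) ^ 2 * f (1 + y ^ 2)⁻¹ := by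
  have hderiv : ∀ y ∈ Ioi (0 : ℝ), HasDerivWithinAt (fun y : ℝ => (1 + y ^ 2)⁻¹)
      (-(2 * y) / (1 + y ^ 2) ^ 2) (Ioi 0) y := fun y _ => by
    have h : HasDerivAt (fun y : ℝ => 1 + y ^ 2) (2 * y) y := by
      simpa using (hasDerivAt_pow 2 y).const_add 1
    exact (h.inv (by positivity)).hasDerivWithinAt
  rw [← image_inv_one_add_sq_Ioi, integral_image_eq_integral_abs_deriv_smul measurableSet_Ioi
    hderiv strictAntiOn_inv_one_add_sq.injOn]
  refine setIntegral_congr_fun measurableSet_Ioi fun y (hy : 0 < y) => ?_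
  rw [smul_eq_mul, abs_div, abs_neg, abs_of_pos (by positivity), abs_of_pos (by positivity)]

lemma integral_Ioi_exp_neg_one_add_sq_mul (b y : ℝ) :
    ∫ u in Ioi b, exp (-(1 + y ^ 2) * u) = exp (-(1 + y ^ 2) * b) / (1 + y ^ 2) := by
  rw [integral_exp_mul_Ioi (by nlinarith [sq_nonneg y]), neg_div_neg_eq]

lemma integral_Ioi_zero_exp_neg_one_add_sq_mul (u : ℝ) :
    ∫ y in Ioi 0, exp (-(1 + y ^ 2) * u) = exp (-u) * (√(π / u) / 2) := by
  have hsplit : ∀ y : ℝ, exp (-(1 + y ^ 2) * u) = exp (-u) * exp (-u * y ^ 2) := fun y => by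
    rw [← exp_add]; ring_nf
  simp only [hsplit, integral_const_mul, integral_gaussian_Ioi]

lemma integrable_exp_neg_one_add_sq_mul_prod {b : ℝ} (hb : 0 ≤ b) :
    Integrable (fun p : ℝ × ℝ => exp (-(1 + p.1 ^ 2) * p.2))
      ((volume.restrict (Ioi 0)).prod (volume.restrict (Ioi b))) := by
  have hpos : ∀ y : ℝ, 0 < 1 + y ^ 2 := fun y => by positivity
  refine (integrable_prod_iff (by fun_prop)).2 ⟨.of_forall fun y =>
    exp_neg_integrableOn_Ioi b (hpos y), ?_⟩
  simp only [norm_of_nonneg (exp_pos _).le, integral_Ioi_exp_neg_one_add_sq_mul]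
  refine integrable_inv_one_add_sq.restrict.mono' (by fun_prop : Measurable _).aestronglyMeasurable
    (.of_forall fun y => ?_)
  have hexp : exp (-(1 + y ^ 2) * b) ≤ 1 :=
    exp_le_one_iff.2 (mul_nonpos_of_nonpos_of_nonneg (by linarith [hpos y]) hb)
  rw [norm_of_nonneg (by positivity), div_eq_mul_inv]
  exact mul_le_of_le_one_left (by positivity) hexp

lemma integral_Ioi_zero_exp_neg_one_add_sq_mul_div {b : ℝ} (hb : 0 ≤ b) :
    ∫ y in Ioi 0, exp (-(1 + y ^ 2) * b) / (1 + y ^ 2) =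
      √π / 2 * ∫ u in Ioi b, exp (-u) / √u := by
  have hswap := integral_integral_swap (f := fun y u => exp (-(1 + y ^ 2) * u))
    (integrable_exp_neg_one_add_sq_mul_prod hb)
  simp only [integral_Ioi_exp_neg_one_add_sq_mul,
    integral_Ioi_zero_exp_neg_one_add_sq_mul] at hswap
  rw [hswap, ← integral_const_mul]
  refine setIntegral_congr_fun measurableSet_Ioi fun u (hu : b < u) => ?_
  rw [sqrt_div' _ (hb.trans hu.le)]
  ring

lemma integral_Ioo_inv_sqrt_mul_exp_rescale {t : ℝ} (ht : t < 1) (a : ℝ) :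
    ∫ s in Ioo t 1, 1 / √((1 - s) * (s - t)) * exp (-a / (s - t)) =
      ∫ v in Ioo 0 1, 1 / √((1 - v) * v) * exp (-(a / (1 - t)) / v) := by
  have h1t : 0 < 1 - t := sub_pos.2 ht
  rw [setIntegral_Ioo_eq_mul_setIntegral_Ioo_zero_one _ ht, ← integral_const_mul]
  refine setIntegral_congr_fun measurableSet_Ioo fun v ⟨hv0, hv1⟩ => ?_
  have hsqrt : √((1 - ((1 - t) * v + t)) * ((1 - t) * v + t - t)) = (1 - t) * √((1 - v) * v) := by
    rw [show (1 - ((1 - t) * v + t)) * ((1 - t) * v + t - t) = (1 - t) ^ 2 * ((1 - v) * v) by ring,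
      sqrt_mul (sq_nonneg _), sqrt_sq h1t.le]
  have hsqrt_pos : 0 < √((1 - v) * v) := sqrt_pos.2 (by nlinarith)
  rw [hsqrt, add_sub_cancel_right]
  field_simp

lemma integral_Ioo_zero_one_inv_sqrt_mul_exp (b : ℝ) :
    ∫ v in Ioo 0 1, 1 / √((1 - v) * v) * exp (-b / v) =
      2 * ∫ y in Ioi 0, exp (-(1 + y ^ 2) * b) / (1 + y ^ 2) := by
  rw [setIntegral_Ioo_zero_one_eq_setIntegral_Ioi, ← integral_const_mul]
  refine setIntegral_congr_fun measurableSet_Ioi fun y (hy : 0 < y) => ?_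
  have hpos : 0 < 1 + y ^ 2 := by positivity
  have hsqrt : √((1 - (1 + y ^ 2)⁻¹) * (1 + y ^ 2)⁻¹) = y / (1 + y ^ 2) := by
    rw [show (1 - (1 + y ^ 2)⁻¹) * (1 + y ^ 2)⁻¹ = (y / (1 + y ^ 2)) ^ 2 by field_simp; ring]
    exact sqrt_sq (by positivity)
  rw [hsqrt, div_inv_eq_mul]
  field_simp

theorem integral_identity_timechange (t : ℝ) (ht : t ∈ Set.Ioo (0 : ℝ) 1)
    (a : ℝ) (ha : 0 ≤ a) :
    ∫ s in Set.Ioo t 1,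
        1 / Real.sqrt ((1 - s) * (s - t)) * Real.exp (-a / (s - t)) =
      Real.sqrt π * ∫ u in Set.Ioi (a / (1 - t)), Real.exp (-u) / Real.sqrt u := by
  rw [integral_Ioo_inv_sqrt_mul_exp_rescale ht.2, integral_Ioo_zero_one_inv_sqrt_mul_exp,
    integral_Ioi_zero_exp_neg_one_add_sq_mul_div (div_nonneg ha (sub_pos.2 ht.2).le)]
  ring
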